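/- arXiv:1607.05646 — 3 statements merged into one kernel-verified Lean document; each statement's English description precedes it below -/
import Mathlib

section
/- Let p ≥ 2 and q ≥ 1 be integers and α < 0 a real number. Then the integral ∫₁^∞ e^{(1−p−q)s}·(sinh(e^{αs}))^{−q} ds is finite if and only if α > (1−p−q)/q. -/
/-! Since `e^{αs} → 0` and `sinh x ~ x` at `0`, the integrand is asymptotically equivalent to
`e^{(1-p-q-qα)s}` at `+∞`. Being continuous, it is integrable on `[1, ∞)` exactly when this
exponential is integrable at `+∞`, i.e. when `1 - p - q - qα < 0`. -/

open MeasureTheory Real Set Filter Asymptotics Topology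

theorem Asymptotics.IsTheta.integrableAtFilter_iff {α E F : Type*} [MeasurableSpace α]
    [NormedAddCommGroup E] [NormedAddCommGroup F] {f : α → E} {g : α → F} {l : Filter α}
    [l.IsMeasurablyGenerated] {μ : Measure α} (h : f =Θ[l] g)
    (hf : StronglyMeasurableAtFilter f l μ) (hg : StronglyMeasurableAtFilter g l μ) :
    IntegrableAtFilter f l μ ↔ IntegrableAtFilter g l μ :=
  ⟨h.symm.isBigO.integrableAtFilter hg, h.isBigO.integrableAtFilter hf⟩

theorem integrableAtFilter_exp_mul_atTop_iff {b : ℝ} :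
    IntegrableAtFilter (fun s => exp (b * s)) atTop ↔ b < 0 := by
  refine ⟨fun h => ?_, fun hb => ⟨Ioi 0, Ioi_mem_atTop 0, integrableOn_exp_mul_Ioi hb 0⟩⟩
  by_contra! hb
  obtain ⟨a, ha⟩ := integrableAtFilter_atTop_iff.1 h
  have hone : IntegrableOn (fun _ => (1 : ℝ)) (Ici (max a 0)) := by
    refine (ha.mono_set (Ici_subset_Ici.2 (le_max_left a 0))).mono' aestronglyMeasurable_const
      ((ae_restrict_iff' measurableSet_Ici).2 (Eventually.of_forall fun s hs => ?_))
    have : 0 ≤ b * s := mul_nonneg hb ((le_max_right a 0).trans hs)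
    simpa using one_le_exp this
  simp [integrableOn_const_iff] at hone

theorem exp_mul_mul_sinh_exp_rpow_isEquivalent {α : ℝ} (hα : α < 0) (c r : ℝ) :
    (fun s => exp (c * s) * sinh (exp (α * s)) ^ r) ~[atTop] fun s => exp ((c + r * α) * s) := by
  have hexp : Tendsto (fun s => exp (α * s)) atTop (𝓝 0) :=
    tendsto_exp_atBot.comp (tendsto_id.const_mul_atTop_of_neg hα)
  have hsinh : (fun s => sinh (exp (α * s))) ~[atTop] fun s => exp (α * s) :=
    isEquivalent_sinh.comp_tendsto hexp
  have hpow := hsinh.rpow (fun s => (exp_pos _).le) (r := r)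
  refine (IsEquivalent.refl.mul hpow).congr_right (Eventually.of_forall fun s => ?_)
  rw [Pi.mul_apply, Pi.pow_apply, ← exp_mul, ← exp_add]
  ring_nf

theorem continuous_exp_mul_mul_sinh_exp_rpow (α c r : ℝ) :
    Continuous fun s => exp (c * s) * sinh (exp (α * s)) ^ r :=
  (continuous_exp.comp (continuous_const_mul c)).mul <|
    (continuous_sinh.comp (continuous_exp.comp (continuous_const_mul α))).rpow_const
      fun _ => Or.inl (sinh_pos_iff.2 (exp_pos _)).ne'

theorem hyperbolic_test_integral_finite_iff_general (p q : ℕ) (hq : 1 ≤ q)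
    (α : ℝ) (hα : α < 0) :
    MeasureTheory.IntegrableOn
        (fun s : ℝ => Real.exp (((1:ℝ) - p - q) * s) *
          Real.sinh (Real.exp (α * s)) ^ (-(q:ℝ))) (Set.Ici 1) ↔
      α > ((1:ℝ) - p - q) / q := by
  have hcont := continuous_exp_mul_mul_sinh_exp_rpow α (1 - p - q) (-q)
  have hequiv := exp_mul_mul_sinh_exp_rpow_isEquivalent hα (1 - p - q) (-q)
  rw [integrableOn_Ici_iff_integrableAtFilter_atTop,
    and_iff_left (hcont.locallyIntegrable.locallyIntegrableOn _),
    hequiv.isTheta.integrableAtFilter_iff (hcont.stronglyMeasurableAtFilter _ _)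
      ((by fun_prop : Continuous _).stronglyMeasurableAtFilter _ _),
    integrableAtFilter_exp_mul_atTop_iff, gt_iff_lt, div_lt_iff₀ (by positivity)]
  constructor <;> intro <;> linarith

/-- The hyperbolic test integral `∫₁^∞ e^{(1-p-q)s} sinh(e^{αs})^{-q} ds` is finite
iff `α > (1-p-q)/q`. -/
theorem hyperbolic_test_integral_finite_iff (p q : ℕ) (hp : 2 ≤ p) (hq : 1 ≤ q)
    (α : ℝ) (hα : α < 0) :
    MeasureTheory.IntegrableOn
        (fun s : ℝ => Real.exp (((1:ℝ) - p - q) * s) *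
          Real.sinh (Real.exp (α * s)) ^ (-(q:ℝ))) (Set.Ici 1) ↔
      α > ((1:ℝ) - p - q) / q :=
  hyperbolic_test_integral_finite_iff_general p q hq α hα
end

section
/- Let p ≥ 2 and q ≥ 1 be integers, α < 0 and γ > 1 real numbers. Then ∫₁^∞ e^{(1−p−q)s}·(sinh(exp(α·s^γ)))^{−q} ds = +∞. -/
/-!
For `x = exp (α s^γ) ∈ (0, 1]` we have `sinh x ≤ e x`, so the integrand is at least
`exp ((1 - p - q) s - q - q α s^γ)`. Since `-q α > 0` and `γ > 1`, the term `-q α s^γ` beats the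
linear one and the integrand tends to `+∞`, which is incompatible with integrability on a
half-line of infinite measure.
-/

open Real MeasureTheory Filter Set

theorem not_integrableOn_Ici_of_tendsto_atTop {f : ℝ → ℝ} (a : ℝ) (hf : Tendsto f atTop atTop) :
    ¬ IntegrableOn f (Ici a) := by
  intro hint
  obtain ⟨N, hN⟩ := eventually_atTop.1 (hf.eventually_ge_atTop 1)
  have hone : IntegrableOn (fun _ ↦ (1 : ℝ)) (Ici (max a N)) := by
    refine (hint.mono_set (Ici_subset_Ici.2 (le_max_left a N))).norm.mono' aestronglyMeasurable_const ?_
    filter_upwards [self_mem_ae_restrict measurableSet_Ici] with s hs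
    simpa using (hN s (le_of_max_le_right hs)).trans (le_abs_self _)
  simp [integrableOn_const_iff, volume_Ici] at hone

theorem Real.sinh_le_mul_exp (x : ℝ) : sinh x ≤ x * exp x := by
  have hsq : exp (-x) * exp (-x) = exp (-(2 * x)) := by rw [← exp_add]; ring_nf
  have hinv : exp (-x) * exp x = 1 := by rw [← exp_add]; simp
  have := add_one_le_exp (-(2 * x))
  rw [sinh_eq]
  nlinarith [exp_pos x, exp_pos (-x)]

theorem Real.exp_mul_one_add_le_sinh_exp_rpow {t r : ℝ} (ht : t ≤ 0) (hr : r ≤ 0) :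
    exp ((1 + t) * r) ≤ sinh (exp t) ^ r := by
  have hsinh : sinh (exp t) ≤ exp (1 + t) :=
    calc sinh (exp t) ≤ exp t * exp (exp t) := sinh_le_mul_exp _
      _ ≤ exp t * exp 1 := by gcongr; exact exp_le_one_iff.2 ht
      _ = exp (1 + t) := by rw [exp_add, mul_comm]
  rw [exp_mul]
  exact rpow_le_rpow_of_nonpos (sinh_pos_iff.2 (exp_pos t)) hsinh hr

theorem tendsto_mul_add_mul_rpow_atTop (a : ℝ) {b γ : ℝ} (hb : 0 < b) (hγ : 1 < γ) :
    Tendsto (fun s : ℝ ↦ a * s + b * s ^ γ) atTop atTop := by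
  have hfactor : Tendsto (fun s : ℝ ↦ s * (a + b * s ^ (γ - 1))) atTop atTop :=
    tendsto_id.atTop_mul_atTop₀ <| tendsto_atTop_add_const_left _ a <|
      (tendsto_rpow_atTop (by linarith)).const_mul_atTop hb
  refine hfactor.congr' ?_
  filter_upwards [eventually_gt_atTop 0] with s hs
  rw [mul_add, ← mul_assoc, mul_comm s b, mul_assoc, ← rpow_one_add' hs.le (by linarith)]
  ring_nf

theorem hyperbolic_superlinear_integral_infinite_general (p q : ℕ) (hq : 1 ≤ q)
    (α γ : ℝ) (hα : α < 0) (hγ : 1 < γ) :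
    ¬ MeasureTheory.IntegrableOn
        (fun s : ℝ => Real.exp (((1:ℝ) - p - q) * s) *
          Real.sinh (Real.exp (α * s ^ γ)) ^ (-(q:ℝ))) (Set.Ici 1) := by
  have hq₀ : (0 : ℝ) < q := by exact_mod_cast hq
  have hexponent : Tendsto (fun s : ℝ ↦ ((1 - p - q) * s + (-q * α) * s ^ γ) + -q) atTop atTop :=
    tendsto_atTop_add_const_right _ _ <|
      tendsto_mul_add_mul_rpow_atTop _ (by nlinarith) hγ
  refine not_integrableOn_Ici_of_tendsto_atTop 1 <| tendsto_atTop_mono' _ ?_ <|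
    tendsto_exp_atTop.comp hexponent
  filter_upwards [eventually_ge_atTop 0] with s hs
  have hαs : α * s ^ γ ≤ 0 := mul_nonpos_of_nonpos_of_nonneg hα.le (rpow_nonneg hs γ)
  calc exp (((1 - p - q) * s + (-q * α) * s ^ γ) + -q)
      = exp ((1 - p - q) * s) * exp ((1 + α * s ^ γ) * -q) := by rw [← exp_add]; ring_nf
    _ ≤ exp ((1 - p - q) * s) * sinh (exp (α * s ^ γ)) ^ (-(q : ℝ)) := by
      gcongr
      exact exp_mul_one_add_le_sinh_exp_rpow hαs (by linarith)

/-- For superlinear exponential decay profiles `f(s) = e^{α s^γ}` with `α < 0`, `γ > 1`,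
the hyperbolic test integral always diverges. -/
theorem hyperbolic_superlinear_integral_infinite (p q : ℕ) (hp : 2 ≤ p) (hq : 1 ≤ q)
    (α γ : ℝ) (hα : α < 0) (hγ : 1 < γ) :
    ¬ MeasureTheory.IntegrableOn
        (fun s : ℝ => Real.exp (((1:ℝ) - p - q) * s) *
          Real.sinh (Real.exp (α * s ^ γ)) ^ (-(q:ℝ))) (Set.Ici 1) :=
  hyperbolic_superlinear_integral_infinite_general p q hq α γ hα hγ
end

section
/- Let q ≥ 1 be an integer, s₀ > 0, f : [s₀,∞) → (0,∞) continuously differentiable, and ξ : (0,∞) → (0,∞) continuously differentiable with ξ'(r) ≥ 1 for all r > 0. Assume that ξ'(f(s)) → 1 as s → ∞ and that ∫_{s₀}^∞ (|f'(s)|/ξ(f(s)))·|1 − ξ'(f(s))²| ds < ∞. Define L(s) = f'(s)/(ξ(f(s))·ξ'(f(s))). Then the function t ↦ exp(−q∫_{s₀}^t L(s) ds)·ξ(f(t))^{q} converges to a finite positive limit as t → ∞. -/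
/-!
Write `b = f'/ξ(f)` and `y = ξ'(f) ≥ 1`. The logarithmic derivative of `ξ ∘ f` is `b y`, while
`L = b / y`, and `|b y - b / y| = |b| |y² - 1| / y ≤ |b| |1 - y²|` is integrable on `[s₀, ∞)`.
Hence `log ξ(f(t)) - ∫_{s₀}^t L = log ξ(f(s₀)) + ∫_{s₀}^t (b y - L)` converges, so
`exp(-∫_{s₀}^t L) ξ(f(t))` tends to a positive limit, and so does its `q`-th power.
-/

open Filter MeasureTheory Set Topology Real

theorem abs_mul_sub_div_le {b y : ℝ} (hy : 1 ≤ y) : |b * y - b / y| ≤ |b| * |1 - y ^ 2| := by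
  have hy0 : 0 < y := one_pos.trans_le hy
  have hid : b * y - b / y = b * (y ^ 2 - 1) / y := by field_simp
  rw [hid, abs_div, abs_mul, abs_of_pos hy0, abs_sub_comm 1]
  exact div_le_self (by positivity) hy

theorem integrableOn_mul_sub_div_of_one_le {b y : ℝ → ℝ} {s : Set ℝ} (hs : MeasurableSet s)
    (hb : ContinuousOn b s) (hy : ContinuousOn y s) (hy1 : ∀ x ∈ s, 1 ≤ y x)
    (hint : IntegrableOn (fun x => |b x| * |1 - y x ^ 2|) s) :
    IntegrableOn (fun x => b x * y x - b x / y x) s := by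
  have hcont : ContinuousOn (fun x => b x * y x - b x / y x) s :=
    (hb.mul hy).sub (hb.div hy fun x hx => (one_pos.trans_le (hy1 x hx)).ne')
  refine hint.mono' (hcont.aestronglyMeasurable hs) ?_
  exact (ae_restrict_iff' hs).2 (.of_forall fun x hx => abs_mul_sub_div_le (hy1 x hx))

theorem integral_eq_log_sub_log_of_hasDerivAt_mul {g B : ℝ → ℝ} {a t : ℝ} (hat : a ≤ t)
    (hg : ∀ s ∈ Ici a, 0 < g s) (hderiv : ∀ s ∈ Ici a, HasDerivAt g (g s * B s) s)
    (hB : ContinuousOn B (Ici a)) :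
    ∫ s in a..t, B s = log (g t) - log (g a) := by
  have hsub : uIcc a t ⊆ Ici a := uIcc_of_le hat ▸ Icc_subset_Ici_self
  refine intervalIntegral.integral_eq_sub_of_hasDerivAt (f := fun s => log (g s)) (fun s hs => ?_)
    ((hB.mono hsub).intervalIntegrable)
  have hgs := hg s (hsub hs)
  exact ((hderiv s (hsub hs)).log hgs.ne').congr_deriv (mul_div_cancel_left₀ _ hgs.ne')

theorem tendsto_exp_neg_integral_mul_of_integrableOn_sub {g B L : ℝ → ℝ} {a : ℝ}
    (hg : ∀ s ∈ Ici a, 0 < g s) (hderiv : ∀ s ∈ Ici a, HasDerivAt g (g s * B s) s)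
    (hB : ContinuousOn B (Ici a)) (hL : ContinuousOn L (Ici a))
    (hint : IntegrableOn (fun s => B s - L s) (Ici a)) :
    Tendsto (fun t => exp (-∫ s in a..t, L s) * g t) atTop
      (𝓝 (g a * exp (∫ s in Ioi a, B s - L s))) := by
  have hrepr : ∀ t ≥ a, exp (-∫ s in a..t, L s) * g t = g a * exp (∫ s in a..t, B s - L s) := by
    intro t hat
    have hsub : uIcc a t ⊆ Ici a := uIcc_of_le hat ▸ Icc_subset_Ici_self
    rw [intervalIntegral.integral_sub ((hB.mono hsub).intervalIntegrable)
        ((hL.mono hsub).intervalIntegrable),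
      integral_eq_log_sub_log_of_hasDerivAt_mul hat hg hderiv hB,
      exp_sub, exp_sub, exp_log (hg t hat), exp_log (hg a self_mem_Ici), exp_neg]
    field_simp [(hg a self_mem_Ici).ne']
  have hlim : Tendsto (fun t => ∫ s in a..t, B s - L s) atTop (𝓝 (∫ s in Ioi a, B s - L s)) :=
    intervalIntegral_tendsto_integral_Ioi a (hint.mono_set Ioi_subset_Ici_self) tendsto_id
  exact (hlim.rexp.const_mul (g a)).congr'
    ((eventually_ge_atTop a).mono fun t hat => (hrepr t hat).symm)

theorem exp_int_L_xi_f_converges_general (q : ℕ) (s₀ : ℝ)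
    (f ξ : ℝ → ℝ)
    (hfC : ContDiff ℝ 1 f) (hfpos : ∀ s ≥ s₀, 0 < f s)
    (hξpos : ∀ r > (0:ℝ), 0 < ξ r)
    (hξC : ∀ r > (0:ℝ), ContDiffAt ℝ 1 ξ r)
    (hξ' : ∀ r > (0:ℝ), 1 ≤ deriv ξ r)
    (hint : MeasureTheory.IntegrableOn
      (fun s => |deriv f s| / ξ (f s) * |1 - (deriv ξ (f s)) ^ 2|) (Set.Ici s₀)) :
    ∃ c : ℝ, 0 < c ∧ Filter.Tendsto
      (fun t => Real.exp (-(q:ℝ) * ∫ s in s₀..t, deriv f s / (ξ (f s) * deriv ξ (f s))) *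
        ξ (f t) ^ q)
      Filter.atTop (nhds c) := by
  set b : ℝ → ℝ := fun s => deriv f s / ξ (f s)
  set y : ℝ → ℝ := fun s => deriv ξ (f s)
  have hξf_pos : ∀ s ∈ Ici s₀, 0 < ξ (f s) := fun s hs => hξpos _ (hfpos s hs)
  have hy_one : ∀ s ∈ Ici s₀, 1 ≤ y s := fun s hs => hξ' _ (hfpos s hs)
  have hξOn : ContDiffOn ℝ 1 ξ (Ioi 0) := fun r hr => (hξC r hr).contDiffWithinAt
  have hy : ContinuousOn y (Ici s₀) :=
    (hξOn.continuousOn_deriv_of_isOpen isOpen_Ioi le_rfl).comp hfC.continuous.continuousOn hfpos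
  have hb : ContinuousOn b (Ici s₀) :=
    (hfC.continuous_deriv le_rfl).continuousOn.div
      (hξOn.continuousOn.comp hfC.continuous.continuousOn hfpos) fun s hs => (hξf_pos s hs).ne'
  have hderiv : ∀ s ∈ Ici s₀, HasDerivAt (fun s => ξ (f s)) (ξ (f s) * (b s * y s)) s := by
    intro s hs
    refine (((hξC _ (hfpos s hs)).differentiableAt one_ne_zero).hasDerivAt.comp s
      (hfC.differentiable one_ne_zero s).hasDerivAt).congr_deriv ?_
    simp only [b, y]
    field_simp [(hξf_pos s hs).ne']
  have hint' : IntegrableOn (fun s => b s * y s - b s / y s) (Ici s₀) := by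
    refine integrableOn_mul_sub_div_of_one_le measurableSet_Ici hb hy hy_one
      (hint.congr_fun (fun s hs => ?_) measurableSet_Ici)
    simp only [b, y, abs_div, abs_of_pos (hξf_pos s hs)]
  have hL : ContinuousOn (fun s => b s / y s) (Ici s₀) :=
    hb.div hy fun s hs => (one_pos.trans_le (hy_one s hs)).ne'
  have hlim := (tendsto_exp_neg_integral_mul_of_integrableOn_sub hξf_pos hderiv (hb.mul hy) hL
    hint').pow q
  refine ⟨_, pow_pos (mul_pos (hξf_pos s₀ self_mem_Ici) (exp_pos _)) q, hlim.congr fun t => ?_⟩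
  simp only [b, y, div_div, mul_pow, ← exp_nat_mul, mul_neg, neg_mul]

/-- Under the hypotheses `ξ'(f(s)) → 1` and `∫ (|f'|/ξ(f)) |1 - ξ'(f)²| < ∞`, the quantity
`exp(-q ∫_{s₀}^t L) · ξ(f(t))^q`, with `L = f'/(ξ(f) ξ'(f))`, converges to a finite
positive limit as `t → ∞`. -/
theorem exp_int_L_xi_f_converges (q : ℕ) (hq : 1 ≤ q) (s₀ : ℝ) (hs₀ : 0 < s₀)
    (f ξ : ℝ → ℝ)
    (hfC : ContDiff ℝ 1 f) (hfpos : ∀ s ≥ s₀, 0 < f s)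
    (hξpos : ∀ r > (0:ℝ), 0 < ξ r)
    (hξC : ∀ r > (0:ℝ), ContDiffAt ℝ 1 ξ r)
    (hξ' : ∀ r > (0:ℝ), 1 ≤ deriv ξ r)
    (hlim : Filter.Tendsto (fun s => deriv ξ (f s)) Filter.atTop (nhds 1))
    (hint : MeasureTheory.IntegrableOn
      (fun s => |deriv f s| / ξ (f s) * |1 - (deriv ξ (f s)) ^ 2|) (Set.Ici s₀)) :
    ∃ c : ℝ, 0 < c ∧ Filter.Tendsto
      (fun t => Real.exp (-(q:ℝ) * ∫ s in s₀..t, deriv f s / (ξ (f s) * deriv ξ (f s))) *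
        ξ (f t) ^ q)
      Filter.atTop (nhds c) :=
  exp_int_L_xi_f_converges_general q s₀ f ξ hfC hfpos hξpos hξC hξ' hint
end
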